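/- Let G = {c ∈ R^L : c_i > 0 for all i, Σ_i c_i = 1} and ζ_i(c) = log c_i. Then there exists C > 0 (depending only on L) such that for all c ∈ G: |ζ(c)| ≤ C(1 + |P_ℓ ζ(c)|), where P_ℓ = I - ℓ⊗ℓ/L and ℓ = (1,…,1). -/
import Mathlib


open Finset

theorem stmt13 (L : ℕ) (hL : 2 ≤ L) :
    ∃ C > (0:ℝ), ∀ c : Fin L → ℝ,
      (∀ i, 0 < c i) → (∑ i, c i = 1) →
      Real.sqrt (∑ i, (Real.log (c i)) ^ 2) ≤
        C * (1 + Real.sqrt (∑ i, (Real.log (c i) - (∑ j, Real.log (c j)) / L) ^ 2)) := by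
  have hL1 : (1:ℝ) ≤ L := by exact_mod_cast Nat.one_le_of_lt hL
  have hLpos : (0:ℝ) < L := by linarith
  have hlogL : 0 ≤ Real.log L := Real.log_nonneg hL1
  have hsqL : 0 ≤ Real.sqrt L := Real.sqrt_nonneg _
  refine ⟨(1 + Real.sqrt L) * (1 + Real.log L), by nlinarith, ?_⟩
  intro c hc hsum
  set ζ : Fin L → ℝ := fun i => Real.log (c i) with hζ
  set m : ℝ := (∑ j, ζ j) / L with hm
  have hsumζ : ∑ i, ζ i = L * m := by
    rw [hm]; field_simp
  set D : ℝ := Real.sqrt (∑ i, (ζ i - m) ^ 2) with hD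
  have hD0 : 0 ≤ D := Real.sqrt_nonneg _
  have hDsq : D ^ 2 = ∑ i, (ζ i - m) ^ 2 :=
    Real.sq_sqrt (Finset.sum_nonneg fun i _ => sq_nonneg _)
  -- Pythagoras
  have hpy : ∑ i, (ζ i) ^ 2 = ∑ i, (ζ i - m) ^ 2 + L * m ^ 2 := by
    have expand : ∀ i : Fin L, (ζ i - m) ^ 2 = (ζ i) ^ 2 - 2 * m * ζ i + m ^ 2 :=
      fun i => by ring
    simp_rw [expand]
    rw [Finset.sum_add_distrib, Finset.sum_sub_distrib, ← Finset.mul_sum, hsumζ,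
      Finset.sum_const, Finset.card_fin]
    ring
  -- each c i ≤ 1, hence ζ i ≤ 0
  have hc1 : ∀ i, c i ≤ 1 := by
    intro i
    have := Finset.single_le_sum (f := c) (fun j _ => (hc j).le) (Finset.mem_univ i)
    linarith [this, hsum.ge, hsum.le]
  have hζ0 : ∀ i, ζ i ≤ 0 := fun i => Real.log_nonpos (hc i).le (hc1 i)
  have hm0 : m ≤ 0 := by
    rw [hm]
    apply div_nonpos_of_nonpos_of_nonneg _ hLpos.le
    exact Finset.sum_nonpos fun i _ => hζ0 i
  -- exists j with 1/L ≤ c j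
  obtain ⟨j, hj⟩ : ∃ j : Fin L, (L:ℝ)⁻¹ ≤ c j := by
    by_contra h
    push_neg at h
    have hne : (Finset.univ : Finset (Fin L)).Nonempty :=
      ⟨⟨0, by omega⟩, Finset.mem_univ _⟩
    have : ∑ i, c i < ∑ _i : Fin L, (L:ℝ)⁻¹ :=
      Finset.sum_lt_sum_of_nonempty hne fun i _ => h i
    rw [Finset.sum_const, Finset.card_fin, hsum, nsmul_eq_mul,
      mul_inv_cancel₀ hLpos.ne'] at this
    exact lt_irrefl _ this
  have hζj : -Real.log L ≤ ζ j := by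
    rw [← Real.log_inv]
    exact Real.log_le_log (by positivity) hj
  -- ζ j - m ≤ D
  have hjm : ζ j - m ≤ D := by
    have h1 : (ζ j - m) ^ 2 ≤ ∑ i, (ζ i - m) ^ 2 :=
      Finset.single_le_sum (f := fun i => (ζ i - m) ^ 2)
        (fun i _ => sq_nonneg _) (Finset.mem_univ j)
    have h2 : Real.sqrt ((ζ j - m) ^ 2) ≤ D := Real.sqrt_le_sqrt h1
    rw [Real.sqrt_sq_eq_abs] at h2
    exact le_trans (le_abs_self _) h2
  have hmabs : -m ≤ Real.log L + D := by
    have : -m = -(ζ j) + (ζ j - m) := by ring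
    rw [this]
    have : -(ζ j) ≤ Real.log L := by linarith [hζj]
    linarith
  -- main bound: √(∑ ζ²) ≤ D + √L * (-m)
  have hS : Real.sqrt (∑ i, (ζ i) ^ 2) ≤ D + Real.sqrt L * (-m) := by
    rw [hpy]
    have hsq : (Real.sqrt L * (-m)) ^ 2 = L * m ^ 2 := by
      rw [mul_pow, Real.sq_sqrt hLpos.le]; ring
    have h1 : ∑ i, (ζ i - m) ^ 2 + L * m ^ 2 ≤ (D + Real.sqrt L * (-m)) ^ 2 := by
      nlinarith [mul_nonneg hsqL (neg_nonneg.mpr hm0), hD0]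
    calc Real.sqrt (∑ i, (ζ i - m) ^ 2 + L * m ^ 2)
        ≤ Real.sqrt ((D + Real.sqrt L * (-m)) ^ 2) := Real.sqrt_le_sqrt h1
      _ = D + Real.sqrt L * (-m) := Real.sqrt_sq (by nlinarith [mul_nonneg hsqL (neg_nonneg.mpr hm0)])
  have final : D + Real.sqrt L * (-m) ≤ (1 + Real.sqrt L) * (1 + Real.log L) * (1 + D) := by
    have h1 : Real.sqrt L * (-m) ≤ Real.sqrt L * (Real.log L + D) :=
      mul_le_mul_of_nonneg_left hmabs hsqL
    nlinarith [mul_nonneg hlogL hD0, mul_nonneg hsqL hD0, mul_nonneg (mul_nonneg hsqL hlogL) hD0]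
  exact le_trans hS final
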